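/- arXiv:1812.07320 — 2 statements merged into one kernel-verified Lean document; each statement's English description precedes it below -/
import Mathlib

section
/- Fix a finite interval [a,b] with a < b. There exists a constant C > 0 such that for every twice continuously differentiable function u : [a,b] → ℂ, every λ ∈ ℂ, and every point x₀ ∈ [a,b], |λ|^{1/4} |u(x₀)| ≤ C [ (‖u‖²_{L²(a,b)} + ‖u'‖²_{L²(a,b)} + ‖u''‖²_{L²(a,b)})^{1/2} + |λ| ‖u‖_{L²(a,b)} ]. -/
/-!
For `s ≥ 0`, integrating the derivative `2⟪u, u'⟫` of `‖u‖²` between a point `y` where `‖u‖²`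
is minimal and `x₀`, and applying Young's inequality `2 s ab ≤ s²a² + b²` pointwise, gives
`s ‖u x₀‖² ≤ (s / (b - a) + s²) ‖u‖²_{L²} + ‖u'‖²_{L²}`. With `s = |λ|^{1/2}` the right-hand
side is at most `(1 + (b - a)⁻¹) (‖u‖_{W²} + |λ| ‖u‖_{L²})²`, because `s ≤ 1 + |λ|` and
`‖u‖²_{L²} ≤ ‖u‖_{L²} ‖u‖_{W²}`; a square root finishes the estimate.
-/

open MeasureTheory intervalIntegral Set RealInnerProductSpace

theorem exists_mem_Icc_mul_le_integral {g : ℝ → ℝ} {a b : ℝ} (hab : a ≤ b) (hg : Continuous g) :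
    ∃ y ∈ Icc a b, (b - a) * g y ≤ ∫ x in a..b, g x := by
  obtain ⟨y, hy, hmin⟩ :=
    isCompact_Icc.exists_isMinOn (nonempty_Icc.mpr hab) hg.continuousOn
  refine ⟨y, hy, ?_⟩
  simpa using integral_mono_on hab (continuous_const.intervalIntegrable (μ := volume) a b)
    (hg.intervalIntegrable a b) fun x hx => hmin hx

theorem norm_sub_le_integral_norm_deriv {E : Type*} [NormedAddCommGroup E] [NormedSpace ℝ E]
    [CompleteSpace E] {f f' : ℝ → E} {a b x y : ℝ} (hf : ∀ t, HasDerivAt f (f' t) t)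
    (hf' : Continuous f') (hx : x ∈ Icc a b) (hy : y ∈ Icc a b) :
    ‖f x - f y‖ ≤ ∫ t in a..b, ‖f' t‖ := by
  rw [← integral_eq_sub_of_hasDerivAt (fun t _ => hf t) (hf'.intervalIntegrable y x)]
  calc ‖∫ t in y..x, f' t‖ ≤ |∫ t in y..x, ‖f' t‖| := norm_integral_le_abs_integral_norm
    _ ≤ |∫ t in a..b, ‖f' t‖| := by
        refine abs_integral_mono_interval ?_ (.of_forall fun t => norm_nonneg _)
          (hf'.norm.intervalIntegrable a b)
        exact uIoc_subset_uIoc_of_uIcc_subset_uIcc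
          (uIcc_subset_uIcc (Icc_subset_uIcc hy) (Icc_subset_uIcc hx))
    _ = ∫ t in a..b, ‖f' t‖ :=
        abs_of_nonneg (integral_nonneg (hx.1.trans hx.2) fun t _ => norm_nonneg _)

section InnerProductSpace

variable {E : Type*} [NormedAddCommGroup E] [InnerProductSpace ℝ E]

theorem mul_abs_two_inner_le {s : ℝ} (hs : 0 ≤ s) (x y : E) :
    s * |2 * ⟪x, y⟫| ≤ s ^ 2 * ‖x‖ ^ 2 + ‖y‖ ^ 2 := by
  have h := abs_real_inner_le_norm x y
  rw [abs_mul, abs_two]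
  nlinarith [sq_nonneg (s * ‖x‖ - ‖y‖), mul_le_mul_of_nonneg_left h hs]

theorem mul_norm_sq_le_integral {u : ℝ → E} (hu : ContDiff ℝ 1 u) {a b s x₀ : ℝ} (hab : a < b)
    (hs : 0 ≤ s) (hx₀ : x₀ ∈ Icc a b) :
    s * ‖u x₀‖ ^ 2 ≤ (s / (b - a) + s ^ 2) * (∫ x in a..b, ‖u x‖ ^ 2)
      + ∫ x in a..b, ‖deriv u x‖ ^ 2 := by
  have hcu : Continuous u := hu.continuous
  have hcu' : Continuous (deriv u) := hu.continuous_deriv le_rfl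
  have hcM : Continuous fun x => ‖u x‖ ^ 2 := by fun_prop
  have hM := hcM.intervalIntegrable (μ := volume) a b
  have hN := (show Continuous fun x => ‖deriv u x‖ ^ 2 by fun_prop).intervalIntegrable
    (μ := volume) a b
  obtain ⟨y, hy, hmean⟩ := exists_mem_Icc_mul_le_integral hab.le hcM
  have hvar : ‖u x₀‖ ^ 2 - ‖u y‖ ^ 2 ≤ ∫ t in a..b, |2 * ⟪u t, deriv u t⟫| :=
    (le_abs_self _).trans <| norm_sub_le_integral_norm_deriv
      (fun t => (hu.differentiable one_ne_zero t).hasDerivAt.norm_sq)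
      (continuous_const.mul (hcu.inner hcu')) hx₀ hy
  have hyoung : s * ∫ t in a..b, |2 * ⟪u t, deriv u t⟫|
      ≤ s ^ 2 * (∫ x in a..b, ‖u x‖ ^ 2) + ∫ x in a..b, ‖deriv u x‖ ^ 2 := by
    rw [← intervalIntegral.integral_const_mul, ← intervalIntegral.integral_const_mul,
      ← intervalIntegral.integral_add (hM.const_mul _) hN]
    exact integral_mono_on hab.le
      ((continuous_const.mul (continuous_const.mul (hcu.inner hcu')).abs).intervalIntegrable a b)
      ((hM.const_mul _).add hN) fun t _ => mul_abs_two_inner_le hs _ _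
  have hmin : s * ‖u y‖ ^ 2 ≤ s / (b - a) * ∫ x in a..b, ‖u x‖ ^ 2 := by
    rw [div_mul_eq_mul_div, le_div_iff₀ (sub_pos.mpr hab), mul_assoc, mul_comm (‖u y‖ ^ 2)]
    exact mul_le_mul_of_nonneg_left hmean hs
  nlinarith [mul_le_mul_of_nonneg_left hvar hs]

end InnerProductSpace

theorem sqrt_mul_le_of_mul_le {e T M N P X : ℝ} (he : 0 < e) (hT : 0 ≤ T) (hM : 0 ≤ M)
    (hN : 0 ≤ N) (hP : 0 ≤ P) (h : √T * X ≤ (√T / e + T) * M + N) :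
    √(√T * X) ≤ √(1 + e⁻¹) * (√(M + N + P) + T * √M) := by
  set s := √T
  set W := √(M + N + P)
  set L := √M
  have hL : 0 ≤ L := Real.sqrt_nonneg _
  have hLW : L ≤ W := Real.sqrt_le_sqrt (by linarith)
  have hd : 0 ≤ e⁻¹ := inv_nonneg.mpr he.le
  have hTM : T * M ≤ T * (L * W) := by
    rw [← Real.mul_self_sqrt hM]
    exact mul_le_mul_of_nonneg_left (mul_le_mul_of_nonneg_left hLW hL) hT
  have hsM : s * M ≤ M + T * (L * W) := by
    have hs : s ≤ 1 + T := by nlinarith [sq_nonneg (s - 1), Real.sq_sqrt hT]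
    nlinarith [mul_le_mul_of_nonneg_right hs hM]
  have hexpand : (W + T * L) ^ 2 = (M + N + P) + 2 * (T * (L * W)) + T ^ 2 * M := by
    rw [show (W + T * L) ^ 2 = W ^ 2 + 2 * (T * (L * W)) + T ^ 2 * L ^ 2 by ring,
      Real.sq_sqrt (by positivity), Real.sq_sqrt hM]
  have hsq : s * X ≤ (1 + e⁻¹) * (W + T * L) ^ 2 := by
    have hTLW : 0 ≤ T * (L * W) := mul_nonneg hT (mul_nonneg hL (hL.trans hLW))
    rw [div_eq_mul_inv] at h
    rw [hexpand]
    linarith [mul_le_mul_of_nonneg_left hsM hd, mul_nonneg hd hTLW, mul_nonneg hd hN,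
      mul_nonneg hd hP, mul_nonneg hd (mul_nonneg (sq_nonneg T) hM),
      mul_nonneg (sq_nonneg T) hM]
  calc √(s * X) ≤ √((1 + e⁻¹) * (W + T * L) ^ 2) := Real.sqrt_le_sqrt hsq
    _ = √(1 + e⁻¹) * (W + T * L) := by
      rw [Real.sqrt_mul (by positivity), Real.sqrt_sq (by positivity)]

/-- Parameter-dependent trace estimate
`|λ|^{1/4} |u(x₀)| ≤ C (‖u‖_{W²(a,b)} + |λ| ‖u‖_{L²(a,b)})` for every `C²`
function `u` on `[a,b]`, every `λ ∈ ℂ` and every `x₀ ∈ [a,b]`. -/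
theorem parameter_trace_estimate (a b : ℝ) (hab : a < b) :
    ∃ C > (0 : ℝ), ∀ u : ℝ → ℂ, ContDiff ℝ 2 u → ∀ l : ℂ, ∀ x₀ ∈ Set.Icc a b,
      ‖l‖ ^ ((1 : ℝ) / 4) * ‖u x₀‖
        ≤ C * ((((∫ x in a..b, ‖u x‖ ^ 2) + (∫ x in a..b, ‖deriv u x‖ ^ 2)
              + (∫ x in a..b, ‖deriv (deriv u) x‖ ^ 2)) ^ ((1 : ℝ) / 2))
            + ‖l‖ * ((∫ x in a..b, ‖u x‖ ^ 2) ^ ((1 : ℝ) / 2))) := by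
  refine ⟨√(1 + (b - a)⁻¹), by positivity, fun u hu l x₀ hx₀ => ?_⟩
  have hT : 0 ≤ ‖l‖ := norm_nonneg l
  have htrace := mul_norm_sq_le_integral (hu.of_le one_le_two) hab (Real.sqrt_nonneg ‖l‖) hx₀
  rw [Real.sq_sqrt hT] at htrace
  have hquarter : ‖l‖ ^ ((1 : ℝ) / 4) = √√‖l‖ := by
    rw [Real.sqrt_eq_rpow, Real.sqrt_eq_rpow, ← Real.rpow_mul hT]
    norm_num
  have hsq : ‖l‖ ^ ((1 : ℝ) / 4) * ‖u x₀‖ = √(√‖l‖ * ‖u x₀‖ ^ 2) := by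
    rw [Real.sqrt_mul (Real.sqrt_nonneg _), Real.sqrt_sq (norm_nonneg _), hquarter]
  rw [hsq, ← Real.sqrt_eq_rpow, ← Real.sqrt_eq_rpow]
  exact sqrt_mul_le_of_mul_le (sub_pos.mpr hab) hT
    (integral_nonneg hab.le fun _ _ => by positivity)
    (integral_nonneg hab.le fun _ _ => by positivity)
    (integral_nonneg hab.le fun _ _ => by positivity) htrace
end

section
/- Let p₁, p₂ be nonzero real numbers, α₀, α₁ real numbers not both zero, β₀, β₁ real numbers not both zero, and γ₀, γ₁, δ₀, δ₁ real numbers satisfying the compatibility condition p₁δ₀ + p₂γ₁ = 0 between the coefficients and the orientation of the two subintervals. Let u = (u₁,u₂) and v = (v₁,v₂) with u₁, v₁ : [−1,0] → ℂ and u₂, v₂ : [0,1] → ℂ twice continuously differentiable, and suppose both u and v satisfy: the boundary conditions α₀w₁(−1) + α₁w₁'(−1) = 0 and β₀w₂(1) + β₁w₂'(1) = 0, and the transmission conditions w₁'(0) = γ₀w₁(0) + δ₀w₂(0) and w₂'(0) = γ₁w₁(0) + δ₁w₂(0). Then p₁∫_{−1}^{0} u₁'' \overline{v₁} + p₂∫_{0}^{1}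 u₂'' \overline{v₂} = p₁∫_{−1}^{0} u₁ \overline{v₁''} + p₂∫_{0}^{1} u₂ \overline{v₂''}, i.e. ⟨£₀u, v⟩ = ⟨u, £₀v⟩. -/
/-! Integrating `(f' ḡ - f ḡ')' = f'' ḡ - f ḡ''` over each subinterval turns both sides into
boundary values of the bracket `[f, g] = f' ḡ - f ḡ'`. A separated boundary condition with
nonzero coefficients forces `[u, v] = 0` at `∓1`, and at `0` the transmission conditions with
`p₁δ₀ + p₂γ₁ = 0` give `p₁ [u₁, v₁](0) = p₂ [u₂, v₂](0)`, so the interface terms cancel. -/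

open MeasureTheory intervalIntegral ComplexConjugate

section Lagrange

variable {f g : ℝ → ℂ}

noncomputable def lagrangeBracket (f g : ℝ → ℂ) (x : ℝ) : ℂ :=
  deriv f x * conj (g x) - f x * conj (deriv g x)

lemma ContDiff.continuous_deriv_deriv (hf : ContDiff ℝ 2 f) : Continuous (deriv (deriv f)) :=
  (hf.deriv' (n := 1)).continuous_deriv_one

lemma hasDerivAt_lagrangeBracket (hf : ContDiff ℝ 2 f) (hg : ContDiff ℝ 2 g) (x : ℝ) :
    HasDerivAt (lagrangeBracket f g)
      (deriv (deriv f) x * conj (g x) - f x * conj (deriv (deriv g) x)) x := by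
  have hasDerivAt_of {h : ℝ → ℂ} (hh : ContDiff ℝ 2 h) :
      HasDerivAt h (deriv h x) x ∧ HasDerivAt (deriv h) (deriv (deriv h) x) x :=
    ⟨(hh.differentiable two_ne_zero x).hasDerivAt,
      ((hh.deriv' (n := 1)).differentiable one_ne_zero x).hasDerivAt⟩
  obtain ⟨hf₁, hf₂⟩ := hasDerivAt_of hf
  obtain ⟨hg₁, hg₂⟩ := hasDerivAt_of hg
  refine ((hf₂.mul hg₁.star).sub (hf₁.mul hg₂.star)).congr_deriv ?_
  simp only [starRingEnd_apply]
  ring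

theorem integral_sub_integral_eq_lagrangeBracket (hf : ContDiff ℝ 2 f) (hg : ContDiff ℝ 2 g)
    (a b : ℝ) :
    (∫ x in a..b, deriv (deriv f) x * conj (g x)) - ∫ x in a..b, f x * conj (deriv (deriv g) x)
      = lagrangeBracket f g b - lagrangeBracket f g a := by
  have hc₁ : Continuous fun x ↦ deriv (deriv f) x * conj (g x) :=
    hf.continuous_deriv_deriv.mul (Complex.continuous_conj.comp hg.continuous)
  have hc₂ : Continuous fun x ↦ f x * conj (deriv (deriv g) x) :=
    hf.continuous.mul (Complex.continuous_conj.comp hg.continuous_deriv_deriv)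
  rw [← integral_sub (hc₁.intervalIntegrable a b) (hc₂.intervalIntegrable a b)]
  exact integral_eq_sub_of_hasDerivAt (fun x _ ↦ hasDerivAt_lagrangeBracket hf hg x)
    ((hc₁.sub hc₂).intervalIntegrable a b)

/-- Both `(f x, f' x)` and `(ḡ x, ḡ' x)` are annihilated by the nonzero real pair `(a₀, a₁)`,
so they are proportional. -/
lemma lagrangeBracket_eq_zero_of_separated {a₀ a₁ : ℝ} (ha : ¬(a₀ = 0 ∧ a₁ = 0)) {x : ℝ}
    (hf : (a₀ : ℂ) * f x + (a₁ : ℂ) * deriv f x = 0)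
    (hg : (a₀ : ℂ) * g x + (a₁ : ℂ) * deriv g x = 0) :
    lagrangeBracket f g x = 0 := by
  have hg' : (a₀ : ℂ) * conj (g x) + (a₁ : ℂ) * conj (deriv g x) = 0 := by
    simpa using congrArg conj hg
  have h₀ : (a₀ : ℂ) * lagrangeBracket f g x = 0 := by
    unfold lagrangeBracket
    linear_combination deriv f x * hg' - conj (deriv g x) * hf
  have h₁ : (a₁ : ℂ) * lagrangeBracket f g x = 0 := by
    unfold lagrangeBracket
    linear_combination conj (g x) * hf - f x * hg'
  by_contra hW
  exact ha ⟨by exact_mod_cast (mul_eq_zero.mp h₀).resolve_right hW,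
    by exact_mod_cast (mul_eq_zero.mp h₁).resolve_right hW⟩

/-- The diagonal terms cancel because `γ₀, δ₁` are real; the off-diagonal ones leave
`(p₁δ₀ + p₂γ₁)(u₂ v̄₁ - u₁ v̄₂)`. -/
lemma mul_lagrangeBracket_eq_of_transmission {p₁ p₂ γ₀ γ₁ δ₀ δ₁ : ℝ}
    (hcomp : p₁ * δ₀ + p₂ * γ₁ = 0) {u₁ u₂ v₁ v₂ : ℝ → ℂ} {x : ℝ}
    (hu₁ : deriv u₁ x = (γ₀ : ℂ) * u₁ x + (δ₀ : ℂ) * u₂ x)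
    (hu₂ : deriv u₂ x = (γ₁ : ℂ) * u₁ x + (δ₁ : ℂ) * u₂ x)
    (hv₁ : deriv v₁ x = (γ₀ : ℂ) * v₁ x + (δ₀ : ℂ) * v₂ x)
    (hv₂ : deriv v₂ x = (γ₁ : ℂ) * v₁ x + (δ₁ : ℂ) * v₂ x) :
    (p₁ : ℂ) * lagrangeBracket u₁ v₁ x = (p₂ : ℂ) * lagrangeBracket u₂ v₂ x := by
  have hcompC : (p₁ : ℂ) * δ₀ + p₂ * γ₁ = 0 := by exact_mod_cast hcomp
  simp only [lagrangeBracket, hu₁, hu₂, hv₁, hv₂, map_add, map_mul, Complex.conj_ofReal]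
  linear_combination (u₂ x * conj (v₁ x) - u₁ x * conj (v₂ x)) * hcompC

end Lagrange

theorem transmission_operator_symmetric_general
    (p₁ p₂ α₀ α₁ β₀ β₁ γ₀ γ₁ δ₀ δ₁ : ℝ)
    (hα : ¬(α₀ = 0 ∧ α₁ = 0)) (hβ : ¬(β₀ = 0 ∧ β₁ = 0))
    (hcomp : p₁ * δ₀ + p₂ * γ₁ = 0)
    (u₁ u₂ v₁ v₂ : ℝ → ℂ)
    (hu₁ : ContDiff ℝ 2 u₁) (hu₂ : ContDiff ℝ 2 u₂)
    (hv₁ : ContDiff ℝ 2 v₁) (hv₂ : ContDiff ℝ 2 v₂)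
    (hubc₁ : (α₀ : ℂ) * u₁ (-1) + (α₁ : ℂ) * deriv u₁ (-1) = 0)
    (hubc₂ : (β₀ : ℂ) * u₂ 1 + (β₁ : ℂ) * deriv u₂ 1 = 0)
    (hutc₁ : deriv u₁ 0 = (γ₀ : ℂ) * u₁ 0 + (δ₀ : ℂ) * u₂ 0)
    (hutc₂ : deriv u₂ 0 = (γ₁ : ℂ) * u₁ 0 + (δ₁ : ℂ) * u₂ 0)
    (hvbc₁ : (α₀ : ℂ) * v₁ (-1) + (α₁ : ℂ) * deriv v₁ (-1) = 0)
    (hvbc₂ : (β₀ : ℂ) * v₂ 1 + (β₁ : ℂ) * deriv v₂ 1 = 0)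
    (hvtc₁ : deriv v₁ 0 = (γ₀ : ℂ) * v₁ 0 + (δ₀ : ℂ) * v₂ 0)
    (hvtc₂ : deriv v₂ 0 = (γ₁ : ℂ) * v₁ 0 + (δ₁ : ℂ) * v₂ 0) :
    (p₁ : ℂ) * (∫ x in (-1 : ℝ)..0, deriv (deriv u₁) x * conj (v₁ x))
      + (p₂ : ℂ) * (∫ x in (0 : ℝ)..1, deriv (deriv u₂) x * conj (v₂ x))
    = (p₁ : ℂ) * (∫ x in (-1 : ℝ)..0, u₁ x * conj (deriv (deriv v₁) x))
      + (p₂ : ℂ) * (∫ x in (0 : ℝ)..1, u₂ x * conj (deriv (deriv v₂) x)) := by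
  have hleft := integral_sub_integral_eq_lagrangeBracket hu₁ hv₁ (-1) 0
  have hright := integral_sub_integral_eq_lagrangeBracket hu₂ hv₂ 0 1
  have hend₁ := lagrangeBracket_eq_zero_of_separated hα hubc₁ hvbc₁
  have hend₂ := lagrangeBracket_eq_zero_of_separated hβ hubc₂ hvbc₂
  have hinterface := mul_lagrangeBracket_eq_of_transmission hcomp hutc₁ hutc₂ hvtc₁ hvtc₂
  linear_combination (p₁ : ℂ) * hleft + (p₂ : ℂ) * hright - (p₁ : ℂ) * hend₁ + (p₂ : ℂ) * hend₂
    + hinterface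

/-- Symmetry of the transmission Sturm–Liouville expression:
if `u` and `v` both satisfy the boundary conditions at `∓1` and the transmission
conditions at `0`, and `p₁δ₀ + p₂γ₁ = 0`, then `⟨£₀u, v⟩ = ⟨u, £₀v⟩`. -/
theorem transmission_operator_symmetric
    (p₁ p₂ α₀ α₁ β₀ β₁ γ₀ γ₁ δ₀ δ₁ : ℝ)
    (hp₁ : p₁ ≠ 0) (hp₂ : p₂ ≠ 0)
    (hα : ¬(α₀ = 0 ∧ α₁ = 0)) (hβ : ¬(β₀ = 0 ∧ β₁ = 0))
    (hcomp : p₁ * δ₀ + p₂ * γ₁ = 0)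
    (u₁ u₂ v₁ v₂ : ℝ → ℂ)
    (hu₁ : ContDiff ℝ 2 u₁) (hu₂ : ContDiff ℝ 2 u₂)
    (hv₁ : ContDiff ℝ 2 v₁) (hv₂ : ContDiff ℝ 2 v₂)
    (hubc₁ : (α₀ : ℂ) * u₁ (-1) + (α₁ : ℂ) * deriv u₁ (-1) = 0)
    (hubc₂ : (β₀ : ℂ) * u₂ 1 + (β₁ : ℂ) * deriv u₂ 1 = 0)
    (hutc₁ : deriv u₁ 0 = (γ₀ : ℂ) * u₁ 0 + (δ₀ : ℂ) * u₂ 0)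
    (hutc₂ : deriv u₂ 0 = (γ₁ : ℂ) * u₁ 0 + (δ₁ : ℂ) * u₂ 0)
    (hvbc₁ : (α₀ : ℂ) * v₁ (-1) + (α₁ : ℂ) * deriv v₁ (-1) = 0)
    (hvbc₂ : (β₀ : ℂ) * v₂ 1 + (β₁ : ℂ) * deriv v₂ 1 = 0)
    (hvtc₁ : deriv v₁ 0 = (γ₀ : ℂ) * v₁ 0 + (δ₀ : ℂ) * v₂ 0)
    (hvtc₂ : deriv v₂ 0 = (γ₁ : ℂ) * v₁ 0 + (δ₁ : ℂ) * v₂ 0) :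
    (p₁ : ℂ) * (∫ x in (-1 : ℝ)..0, deriv (deriv u₁) x * conj (v₁ x))
      + (p₂ : ℂ) * (∫ x in (0 : ℝ)..1, deriv (deriv u₂) x * conj (v₂ x))
    = (p₁ : ℂ) * (∫ x in (-1 : ℝ)..0, u₁ x * conj (deriv (deriv v₁) x))
      + (p₂ : ℂ) * (∫ x in (0 : ℝ)..1, u₂ x * conj (deriv (deriv v₂) x)) :=
  transmission_operator_symmetric_general p₁ p₂ α₀ α₁ β₀ β₁ γ₀ γ₁ δ₀ δ₁ hα hβ hcomp u₁ u₂ v₁ v₂ hu₁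
    hu₂ hv₁ hv₂ hubc₁ hubc₂ hutc₁ hutc₂ hvbc₁ hvbc₂ hvtc₁ hvtc₂
end
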